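/- Let X be a topological space, A : X → Mat(n×n,ℂ) continuous, and let ξ ∈ X be a point that is not a splitting point of the eigenvalues of A. Let U be a connected open neighborhood of ξ containing no splitting points. Then the following are equivalent: (a) there exists a neighborhood V ⊆ U of ξ such that for each 1 ≤ k ≤ n−1 the map ζ ↦ rank((Θ_{A(ζ)})^k) is constant on V; (b) there exists a neighborhood V ⊆ U of ξ such that for each 1 ≤ k ≤ n−1 and each of the continuous eigenvalue functions λ_1,…,λ_m on U (tracking the distinct eigenvalues of A with constant algebraic multiplicities), the map ζ ↦ rank((λ_j(ζ)I − A(ζ))^k) is constant on V. -/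

import Mathlib

/-- The set of (distinct) eigenvalues of a complex matrix. -/
noncomputable def eigFinset {n : ℕ} (Φ : Matrix (Fin n) (Fin n) ℂ) : Finset ℂ :=
  (Matrix.charpoly Φ).roots.toFinset

/-- `Θ_Φ = (λ₁I − Φ)·…·(λ_mI − Φ)`, the product over the distinct eigenvalues of `Φ`. -/
noncomputable def thetaMat {n : ℕ} (Φ : Matrix (Fin n) (Fin n) ℂ) : Matrix (Fin n) (Fin n) ℂ :=
  Polynomial.aeval Φ (∏ μ ∈ eigFinset Φ, (Polynomial.C μ - Polynomial.X))

/-- `ξ` is a splitting point of the eigenvalues of `A`. -/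
def IsSplitPtMat {X : Type*} [TopologicalSpace X] {n : ℕ}
    (A : X → Matrix (Fin n) (Fin n) ℂ) (ξ : X) : Prop :=
  ∀ U ∈ nhds ξ, ∃ ζ ∈ U, (eigFinset (A ξ)).card < (eigFinset (A ζ)).card

/-!
For distinct `μ` the polynomials `(μ - X)^k` are pairwise coprime, so `ker Θ_Φ^k` is the direct
sum of the kernels of the `(μ I - Φ)^k`; in terms of ranks,
`rank Θ_Φ^k + m n = n + ∑ⱼ rank (λⱼ I - Φ)^k` where `m` is the number of distinct eigenvalues.
On `U` this identity holds with the continuous `λⱼ`, so constancy of every summand gives constancy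
of `rank Θ^k`. Conversely, rank is lower semicontinuous, so near `ξ` every summand is at least its
value at `ξ`; a constant sum then forces every summand to be constant.
-/

open Function Polynomial Topology Finset

theorem Matrix.isOpen_setOf_le_rank {𝕜 : Type*} [NontriviallyNormedField 𝕜] [CompleteSpace 𝕜]
    {m n : Type*} [Fintype m] [Fintype n] [DecidableEq n] (r : ℕ) :
    IsOpen {M : Matrix m n 𝕜 | r ≤ M.rank} := by
  let toCLM := (Matrix.toLin' (R := 𝕜) (m := m) (n := n)).trans LinearMap.toContinuousLinearMap
  have hcont : Continuous toCLM := LinearMap.continuous_of_finiteDimensional toCLM.toLinearMap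
  convert (isOpen_setOfPred_nat_le_rank r).preimage hcont using 1
  ext M
  rw [Set.mem_preimage, Set.mem_ofPred, Set.mem_ofPred, LinearMap.rank, ← Module.finrank_eq_rank,
    Nat.cast_le]
  rfl

theorem ContinuousAt.eventually_rank_le {X 𝕜 m n : Type*} [TopologicalSpace X]
    [NontriviallyNormedField 𝕜] [CompleteSpace 𝕜] [Fintype m] [Fintype n] [DecidableEq n]
    {M : X → Matrix m n 𝕜} {ξ : X} (hM : ContinuousAt M ξ) :
    ∀ᶠ ζ in 𝓝 ξ, (M ξ).rank ≤ (M ζ).rank :=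
  hM.preimage_mem_nhds ((Matrix.isOpen_setOf_le_rank _).mem_nhds (Set.mem_ofPred.mpr le_rfl))

theorem Polynomial.finrank_ker_aeval_prod {K V ι : Type*} [Field K] [AddCommGroup V] [Module K V]
    [FiniteDimensional K V] (f : Module.End K V) (s : Finset ι) (p : ι → K[X])
    (hp : (s : Set ι).Pairwise (IsCoprime on p)) :
    Module.finrank K (LinearMap.ker (aeval f (∏ i ∈ s, p i))) =
      ∑ i ∈ s, Module.finrank K (LinearMap.ker (aeval f (p i))) := by
  classical
  induction s using Finset.induction_on with
  | empty =>
    rw [prod_empty, sum_empty, aeval_one, Module.End.one_eq_id, LinearMap.ker_id, finrank_bot]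
  | @insert a s ha ih =>
    rw [coe_insert, Set.pairwise_insert] at hp
    have hcop : IsCoprime (p a) (∏ i ∈ s, p i) :=
      IsCoprime.prod_right fun i hi => (hp.2 i hi fun h => ha (h ▸ hi)).1
    rw [prod_insert ha, sum_insert ha, ← sup_ker_aeval_eq_ker_aeval_mul_of_coprime f hcop,
      ← ih hp.1, ← Submodule.finrank_sup_add_finrank_inf_eq,
      (disjoint_ker_aeval_of_isCoprime f hcop).eq_bot, finrank_bot, add_zero]

theorem Matrix.aeval_mulVecLin {K ι : Type*} [Field K] [Fintype ι] [DecidableEq ι]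
    (Φ : Matrix ι ι K) (p : K[X]) : (aeval Φ p).mulVecLin = aeval Φ.mulVecLin p :=
  (aeval_algHom_apply Matrix.toLinAlgEquiv'.toAlgHom Φ p).symm

theorem Matrix.rank_aeval_prod_add_card_mul {K ι κ : Type*} [Field K] [Fintype ι] [DecidableEq ι]
    (Φ : Matrix ι ι K) (s : Finset κ) (p : κ → K[X])
    (hp : (s : Set κ).Pairwise (IsCoprime on p)) :
    (aeval Φ (∏ i ∈ s, p i)).rank + #s * Fintype.card ι =
      Fintype.card ι + ∑ i ∈ s, (aeval Φ (p i)).rank := by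
  have rank_add_finrank_ker (q : K[X]) :
      (aeval Φ q).rank + Module.finrank K (LinearMap.ker (aeval Φ.mulVecLin q)) =
        Fintype.card ι := by
    rw [Matrix.rank, Matrix.aeval_mulVecLin, LinearMap.finrank_range_add_finrank_ker,
      Module.finrank_fintype_fun_eq_card]
  have hker := Polynomial.finrank_ker_aeval_prod Φ.mulVecLin s p hp
  have hsum : ∑ i ∈ s, ((aeval Φ (p i)).rank +
      Module.finrank K (LinearMap.ker (aeval Φ.mulVecLin (p i)))) = #s * Fintype.card ι := by
    simp [rank_add_finrank_ker]
  rw [sum_add_distrib, ← hker] at hsum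
  have := rank_add_finrank_ker (∏ i ∈ s, p i)
  omega

theorem Polynomial.isCoprime_C_sub_X_pow {K : Type*} [Field K] {a b : K} (h : a ≠ b) (k : ℕ) :
    IsCoprime ((C a - X) ^ k) ((C b - X) ^ k) := by
  rw [← neg_sub X, ← neg_sub X]
  exact (isCoprime_X_sub_C_of_isUnit_sub (sub_ne_zero_of_ne h).isUnit).neg_neg.pow

theorem Matrix.smul_one_sub_pow_eq_aeval {K ι : Type*} [Field K] [Fintype ι] [DecidableEq ι]
    (Φ : Matrix ι ι K) (μ : K) (k : ℕ) : (μ • 1 - Φ) ^ k = aeval Φ ((C μ - X) ^ k) := by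
  simp [Algebra.algebraMap_eq_smul_one]

theorem thetaMat_pow {n : ℕ} (Φ : Matrix (Fin n) (Fin n) ℂ) (k : ℕ) :
    thetaMat Φ ^ k = aeval Φ (∏ μ ∈ eigFinset Φ, (C μ - X) ^ k) := by
  rw [thetaMat, ← map_pow, prod_pow]

theorem rank_thetaMat_pow_add_card_mul {n : ℕ} {ι : Type*} [Fintype ι]
    {Φ : Matrix (Fin n) (Fin n) ℂ} {lam : ι → ℂ} (hinj : Injective lam)
    (heig : eigFinset Φ = univ.image lam) (k : ℕ) :
    (thetaMat Φ ^ k).rank + Fintype.card ι * n =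
      n + ∑ j, ((lam j • (1 : Matrix (Fin n) (Fin n) ℂ) - Φ) ^ k).rank := by
  have h := Matrix.rank_aeval_prod_add_card_mul Φ (eigFinset Φ) (fun μ => (C μ - X) ^ k)
    fun a _ b _ hab => isCoprime_C_sub_X_pow hab k
  rw [← thetaMat_pow, heig, card_image_of_injective _ hinj, sum_image hinj.injOn, card_univ,
    Fintype.card_fin] at h
  simpa only [Matrix.smul_one_sub_pow_eq_aeval] using h

theorem stmt10_general {X : Type*} [TopologicalSpace X] {n : ℕ}
    (A : X → Matrix (Fin n) (Fin n) ℂ)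
    (hcont : ∀ i j, Continuous fun ζ => A ζ i j)
    (ξ : X)
    (U : Set X) (hUo : IsOpen U) (hξU : ξ ∈ U)
    (m : ℕ) (lam : Fin m → X → ℂ)
    (hlamc : ∀ j, ContinuousOn (lam j) U)
    (hlaminj : ∀ ζ ∈ U, ∀ j k : Fin m, j ≠ k → lam j ζ ≠ lam k ζ)
    (hlameig : ∀ ζ ∈ U, ∀ z : ℂ, z ∈ eigFinset (A ζ) ↔ ∃ j, lam j ζ = z) :
    (∃ V : Set X, IsOpen V ∧ ξ ∈ V ∧ V ⊆ U ∧
        ∀ k : ℕ, 1 ≤ k → k ≤ n - 1 → ∀ ζ ∈ V,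
          ((thetaMat (A ζ)) ^ k).rank = ((thetaMat (A ξ)) ^ k).rank) ↔
    (∃ V : Set X, IsOpen V ∧ ξ ∈ V ∧ V ⊆ U ∧
        ∀ k : ℕ, 1 ≤ k → k ≤ n - 1 → ∀ j : Fin m, ∀ ζ ∈ V,
          (((lam j ζ) • (1 : Matrix (Fin n) (Fin n) ℂ) - A ζ) ^ k).rank =
            (((lam j ξ) • (1 : Matrix (Fin n) (Fin n) ℂ) - A ξ) ^ k).rank) := by
  have hU : ∀ᶠ ζ in 𝓝 ξ, ζ ∈ U := hUo.mem_nhds hξU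
  set r : Fin m → ℕ → X → ℕ := fun j k ζ =>
    ((lam j ζ • (1 : Matrix (Fin n) (Fin n) ℂ) - A ζ) ^ k).rank
  have key : ∀ ζ ∈ U, ∀ k, (thetaMat (A ζ) ^ k).rank + Fintype.card (Fin m) * n =
      n + ∑ j, r j k ζ := fun ζ hζ =>
    rank_thetaMat_pow_add_card_mul (fun i j => not_imp_not.mp (hlaminj ζ hζ i j))
      (by ext z; simp [hlameig ζ hζ])
  have semicont : ∀ᶠ ζ in 𝓝 ξ, ζ ∈ U ∧ ∀ k ∈ Iic (n - 1), ∀ j, r j k ξ ≤ r j k ζ := by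
    have hA : Continuous A := continuous_pi fun i => continuous_pi (hcont i)
    refine hU.and ((Filter.eventually_all_finset _).mpr fun k _ =>
      Filter.eventually_all.mpr fun j => ?_)
    exact ((((hlamc j).continuousAt hU).smul continuousAt_const).sub
      hA.continuousAt).pow k |>.eventually_rank_le
  constructor
  · rintro ⟨V, hVo, hξV, hVU, hV⟩
    obtain ⟨W, hWsub, hWo, hξW⟩ := mem_nhds_iff.mp semicont
    refine ⟨V ∩ W, hVo.inter hWo, ⟨hξV, hξW⟩, fun ζ hζ => hVU hζ.1, fun k hk1 hk2 j ζ hζ => ?_⟩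
    have hle : ∀ j ∈ univ, r j k ξ ≤ r j k ζ := fun j _ => (hWsub hζ.2).2 k (mem_Iic.mpr hk2) j
    have hsum : ∑ j, r j k ξ = ∑ j, r j k ζ := by
      have := key ζ (hVU hζ.1) k
      have := key ξ hξU k
      have := hV k hk1 hk2 ζ hζ.1
      omega
    exact ((sum_eq_sum_iff_of_le hle).mp hsum j (mem_univ j)).symm
  · rintro ⟨V, hVo, hξV, hVU, hV⟩
    refine ⟨V, hVo, hξV, hVU, fun k hk1 hk2 ζ hζ => ?_⟩
    have hsum : ∑ j, r j k ζ = ∑ j, r j k ξ := sum_congr rfl fun j _ => hV k hk1 hk2 j ζ hζ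
    have := key ζ (hVU hζ) k
    have := key ξ hξU k
    omega

/-- at a non-splitting point `ξ`, with continuous eigenvalue functions
`λ₁,…,λ_m` on a connected open neighborhood `U` free of splitting points (tracking the
distinct eigenvalues with constant algebraic multiplicities), local constancy of all ranks
`rank((Θ_{A(ζ)})^k)`, `1 ≤ k ≤ n−1`, near `ξ` is equivalent to local constancy of all ranks
`rank((λⱼ(ζ)I − A(ζ))^k)`, `1 ≤ k ≤ n−1`, `1 ≤ j ≤ m`, near `ξ`. -/
theorem stmt10 {X : Type*} [TopologicalSpace X] {n : ℕ}
    (A : X → Matrix (Fin n) (Fin n) ℂ)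
    (hcont : ∀ i j, Continuous fun ζ => A ζ i j)
    (ξ : X) (hns : ¬ IsSplitPtMat A ξ)
    (U : Set X) (hUo : IsOpen U) (hξU : ξ ∈ U) (hUc : IsConnected U)
    (hUns : ∀ ζ ∈ U, ¬ IsSplitPtMat A ζ)
    (m : ℕ) (lam : Fin m → X → ℂ)
    (hlamc : ∀ j, ContinuousOn (lam j) U)
    (hlaminj : ∀ ζ ∈ U, ∀ j k : Fin m, j ≠ k → lam j ζ ≠ lam k ζ)
    (hlameig : ∀ ζ ∈ U, ∀ z : ℂ, z ∈ eigFinset (A ζ) ↔ ∃ j, lam j ζ = z)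
    (hlammult : ∀ ζ ∈ U, ∀ j : Fin m,
      (Matrix.charpoly (A ζ)).rootMultiplicity (lam j ζ) =
        (Matrix.charpoly (A ξ)).rootMultiplicity (lam j ξ)) :
    (∃ V : Set X, IsOpen V ∧ ξ ∈ V ∧ V ⊆ U ∧
        ∀ k : ℕ, 1 ≤ k → k ≤ n - 1 → ∀ ζ ∈ V,
          ((thetaMat (A ζ)) ^ k).rank = ((thetaMat (A ξ)) ^ k).rank) ↔
    (∃ V : Set X, IsOpen V ∧ ξ ∈ V ∧ V ⊆ U ∧
        ∀ k : ℕ, 1 ≤ k → k ≤ n - 1 → ∀ j : Fin m, ∀ ζ ∈ V,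
          (((lam j ζ) • (1 : Matrix (Fin n) (Fin n) ℂ) - A ζ) ^ k).rank =
            (((lam j ξ) • (1 : Matrix (Fin n) (Fin n) ℂ) - A ξ) ^ k).rank) :=
  stmt10_general A hcont ξ U hUo hξU m lam hlamc hlaminj hlameig
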